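/- Let 1 ≤ d ≤ n−1 and let M be an n×d real matrix written in block form M = (G; Σ), where G is an invertible d×d real matrix (the top d rows) and Σ is an (n−d)×d real matrix (the bottom n−d rows). Suppose the (n−d)d entries of Σ form a family that is algebraically independent over the field ℚ(F), where F is the set of entries of G. Then for every e ∈ {1,…,n−1}, the subspace of ℝ^n spanned by the columns of M is (e,1)-irrational. -/

import Mathlib

/-!
Write `A_T` for the column span of `(G; T)`. For a rational subspace `B`, `dim (B + A_T)` is the
rank of a family of vectors whose coordinates are polynomials in the entries of `T` with
coefficients in `K = ℚ(F)`. The Gram determinant of a maximal independent subfamily is such a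
polynomial, and it stays nonzero at the algebraically independent point `T = Σ`; so
`dim (B + A_Σ) ≥ dim (B + A_T)` for every real `T`. It then suffices to exhibit one `T` with
`dim (B + A_T) ≥ min (n, d + e)`, since `dim A_Σ = d` gives `dim (A_Σ ∩ B) ≤ max (0, d + e - n)`.
Such a `T` is built greedily: the columns of `(G; T)` are those of `(G; 0)` moved inside
`E = {x | x₁ = ⋯ = x_d = 0}`, and since `E` and the columns of `(G; 0)` span `ℝⁿ`, columns can be
moved one at a time out of the span built so far.
-/

noncomputable section

open Finset Module

/-- A vector of `ℝⁿ` with integer coordinates. -/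
def IsIntVec {n : ℕ} (v : EuclideanSpace ℝ (Fin n)) : Prop :=
  ∀ i, ∃ z : ℤ, v i = (z : ℝ)

/-- A rational subspace of `ℝⁿ`: one spanned by vectors with rational coordinates. -/
def IsRationalSubspace {n : ℕ} (B : Submodule ℝ (EuclideanSpace ℝ (Fin n))) : Prop :=
  ∃ s : Set (EuclideanSpace ℝ (Fin n)),
    (∀ v ∈ s, ∀ i, ∃ q : ℚ, v i = (q : ℝ)) ∧ Submodule.span ℝ s = B

/-- `A` is `(e,j)`-irrational: every rational subspace `B` of dimension `e` satisfies
`dim (A ⊓ B) < j + g(dim A, e, n)` where `g(d,e,n) = max 0 (d+e-n)`. -/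
def IsIrrational {n : ℕ} (A : Submodule ℝ (EuclideanSpace ℝ (Fin n))) (e j : ℕ) : Prop :=
  ∀ B : Submodule ℝ (EuclideanSpace ℝ (Fin n)),
    IsRationalSubspace B → finrank ℝ B = e →
      finrank ℝ ↥(A ⊓ B) < j + (finrank ℝ A + e - n)

/-- The angle `ω(X,Y) = ‖X∧Y‖ / (‖X‖·‖Y‖)`. -/
def omegaAngle {n : ℕ} (X Y : EuclideanSpace ℝ (Fin n)) : ℝ :=
  Real.sqrt (‖X‖ ^ 2 * ‖Y‖ ^ 2 - (inner ℝ X Y : ℝ) ^ 2) / (‖X‖ * ‖Y‖)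

/-- First angle `ψ₁(A,B)` between two subspaces. -/
def psiOne {n : ℕ} (A B : Submodule ℝ (EuclideanSpace ℝ (Fin n))) : ℝ :=
  sInf {t | ∃ X ∈ A, X ≠ 0 ∧ ∃ Y ∈ B, Y ≠ 0 ∧ t = omegaAngle X Y}

/-- `‖X₁ ∧ ⋯ ∧ X_e‖`, as the square root of the Gram determinant. -/
def gramNorm {n e : ℕ} (X : Fin e → EuclideanSpace ℝ (Fin n)) : ℝ :=
  Real.sqrt (Matrix.of fun i j : Fin e => (inner ℝ (X i) (X j) : ℝ)).det

/-- `X` is a `ℤ`-basis of the lattice `B ∩ ℤⁿ`. -/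
def IsZBasis {n e : ℕ} (X : Fin e → EuclideanSpace ℝ (Fin n))
    (B : Submodule ℝ (EuclideanSpace ℝ (Fin n))) : Prop :=
  (∀ i, X i ∈ B) ∧ (∀ i, IsIntVec (X i)) ∧ LinearIndependent ℝ X ∧
    ∀ v ∈ B, IsIntVec v → ∃ c : Fin e → ℤ, v = ∑ i, (c i : ℝ) • X i

/-- The height `H(B)` of a rational subspace: the common value of `‖X₁ ∧ ⋯ ∧ X_e‖`
over `ℤ`-bases of the lattice `B ∩ ℤⁿ`. -/
def height {n : ℕ} (B : Submodule ℝ (EuclideanSpace ℝ (Fin n))) : ℝ :=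
  sSup {h | ∃ e : ℕ, ∃ X : Fin e → EuclideanSpace ℝ (Fin n), IsZBasis X B ∧ h = gramNorm X}

/-- The Diophantine exponent `μ_n(A|e)₁ ∈ ℝ ∪ {+∞}`. -/
def diophExp {n : ℕ} (A : Submodule ℝ (EuclideanSpace ℝ (Fin n))) (e : ℕ) : EReal :=
  sSup {x : EReal | ∃ μ : ℝ, x = (μ : ℝ) ∧ 0 < μ ∧
    {B : Submodule ℝ (EuclideanSpace ℝ (Fin n)) |
      IsRationalSubspace B ∧ finrank ℝ B = e ∧ psiOne A B ≤ height B ^ (-μ)}.Infinite}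

/-- The `j`-th column of the block matrix `M = (G; S)` viewed as a vector of `ℝⁿ`:
rows `0,…,d−1` come from `G`, rows `d,…,n−1` from `S`. -/
def colVec (n d : ℕ) (G : Matrix (Fin d) (Fin d) ℝ)
    (S : Matrix (Fin (n - d)) (Fin d) ℝ) (j : Fin d) : EuclideanSpace ℝ (Fin n) :=
  WithLp.toLp 2 fun i : Fin n => if h : (i : ℕ) < d then G ⟨i, h⟩ j
    else S ⟨(i : ℕ) - d, by have := i.isLt; omega⟩ j

open Submodule

section Perturbation

variable {K V ι : Type*} [DivisionRing K] [AddCommGroup V] [Module K V] [FiniteDimensional K V]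

theorem finrank_sup_span_singleton_le (p : Submodule K V) (v : V) :
    finrank K ↥(p ⊔ span K {v}) ≤ finrank K p + 1 := by
  by_cases hv : v ∈ p
  · rw [sup_eq_left.mpr ((span_singleton_le_iff_mem v p).mpr hv)]
    exact Nat.le_succ _
  · exact (finrank_sup_span_singleton hv).le

theorem exists_sub_mem_finrank_sup_span_image_ge (E B : Submodule K V) (c : ι → V)
    (s : Finset ι) :
    ∃ a : ι → V, (∀ i, a i - c i ∈ E) ∧
      min (finrank K ↥(E ⊔ B ⊔ span K (c '' s))) (finrank K B + s.card) ≤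
        finrank K ↥(B ⊔ span K (a '' s)) := by
  classical
  induction s using Finset.induction_on with
  | empty =>
    refine ⟨c, fun i => by simp, ?_⟩
    rw [Finset.coe_empty, Set.image_empty, span_empty, sup_bot_eq, sup_bot_eq, Finset.card_empty,
      add_zero]
    exact min_le_right _ (finrank K B)
  | insert j s hj ih =>
    obtain ⟨a, haE, ha⟩ := ih
    set W := B ⊔ span K (a '' s)
    have hR : E ⊔ B ⊔ span K (c '' ↑(insert j s)) =
        E ⊔ B ⊔ span K (c '' s) ⊔ span K {c j} := by
      rw [Finset.coe_insert, Set.image_insert_eq, span_insert]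
      ac_rfl
    by_cases hσ : ∃ σ ∈ E, c j + σ ∉ W
    · obtain ⟨σ, hσE, hσW⟩ := hσ
      refine ⟨Function.update a j (c j + σ), fun i => ?_, ?_⟩
      · rcases eq_or_ne i j with rfl | hij
        · simpa using hσE
        · simpa [hij] using haE i
      have himage :
          Function.update a j (c j + σ) '' ↑(insert j s) = insert (c j + σ) (a '' s) := by
        rw [Finset.coe_insert, Set.image_insert_eq, Function.update_self,
          Set.image_congr fun i hi => Function.update_of_ne (ne_of_mem_of_not_mem hi hj) _ _]
      have hW : B ⊔ span K (insert (c j + σ) (a '' s)) = W ⊔ span K {c j + σ} := by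
        rw [span_insert, sup_left_comm, sup_comm]
      rw [himage, hW, finrank_sup_span_singleton hσW, hR, Finset.card_insert_of_notMem hj]
      have := finrank_sup_span_singleton_le (E ⊔ B ⊔ span K (c '' s)) (c j)
      omega
    · push Not at hσ
      refine ⟨a, haE, ?_⟩
      have hcj : c j ∈ W := by simpa using hσ 0 E.zero_mem
      have hEW : E ≤ W := fun σ hσE => by simpa using W.sub_mem (hσ σ hσE) hcj
      have hRW : E ⊔ B ⊔ span K (c '' ↑(insert j s)) ≤ W := by
        refine sup_le (sup_le hEW le_sup_left) (span_le.mpr ?_)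
        rintro _ ⟨i, hi, rfl⟩
        rcases Finset.mem_insert.mp hi with rfl | hi
        · exact hcj
        · have hai : a i ∈ W := mem_sup_right (subset_span (Set.mem_image_of_mem a hi))
          simpa using W.sub_mem hai (hEW (haE i))
      have hWle : W ≤ B ⊔ span K (a '' ↑(insert j s)) :=
        sup_le_sup_left (span_mono (Set.image_mono (by simp))) B
      exact (min_le_left _ _).trans ((finrank_mono hRW).trans (finrank_mono hWle))

theorem exists_sub_mem_finrank_sup_span_range_ge [Fintype ι] {E : Submodule K V} {c : ι → V}
    (hc : E ⊔ span K (Set.range c) = ⊤) (B : Submodule K V) :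
    ∃ a : ι → V, (∀ i, a i - c i ∈ E) ∧
      min (finrank K V) (finrank K B + Fintype.card ι) ≤
        finrank K ↥(B ⊔ span K (Set.range a)) := by
  obtain ⟨a, haE, ha⟩ := exists_sub_mem_finrank_sup_span_image_ge E B c Finset.univ
  have hR : E ⊔ B ⊔ span K (Set.range c) = ⊤ :=
    top_le_iff.mp (hc ▸ sup_le_sup_right le_sup_left _)
  rw [Finset.coe_univ, Set.image_univ, Set.image_univ, hR, finrank_top, Finset.card_univ] at ha
  exact ⟨a, haE, ha⟩

end Perturbation

section Specialization

variable {K τ ι κ : Type*} [Field K] [Algebra K ℝ] [Fintype κ]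
  {v : (τ → ℝ) → ι → EuclideanSpace ℝ κ}

theorem LinearIndependent.of_algebraicIndependent_of_polynomial [Fintype ι]
    (hv : ∀ i k, ∃ P : MvPolynomial τ K, ∀ z, v z i k = MvPolynomial.aeval z P)
    {x : τ → ℝ} (hx : AlgebraicIndependent K x) {y : τ → ℝ}
    (hy : LinearIndependent ℝ (v y)) : LinearIndependent ℝ (v x) := by
  classical
  choose P hP using hv
  have hgram : ∀ z, (Matrix.gram ℝ (v z)).det =
      MvPolynomial.aeval z (Matrix.of fun i j => ∑ k, P i k * P j k).det := by
    intro z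
    rw [AlgHom.map_det]
    congr 1
    ext i j
    simp [PiLp.inner_apply, hP, mul_comm]
  rw [← Matrix.det_gram_ne_zero_iff_linearIndependent, hgram] at hy ⊢
  exact fun h => hy (by rw [hx (h.trans (map_zero _).symm), map_zero])

theorem finrank_span_range_le_of_algebraicIndependent
    (hv : ∀ i k, ∃ P : MvPolynomial τ K, ∀ z, v z i k = MvPolynomial.aeval z P)
    {x : τ → ℝ} (hx : AlgebraicIndependent K x) (y : τ → ℝ) :
    finrank ℝ ↥(span ℝ (Set.range (v y))) ≤ finrank ℝ ↥(span ℝ (Set.range (v x))) := by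
  obtain ⟨ι', f, -, hspan, hf⟩ := exists_linearIndependent' ℝ (v y)
  have : Fintype ι' := @Fintype.ofFinite _ hf.finite
  have hfx : LinearIndependent ℝ (v x ∘ f) :=
    hf.of_algebraicIndependent_of_polynomial (v := fun z => v z ∘ f) (fun i => hv (f i)) hx
  calc finrank ℝ ↥(span ℝ (Set.range (v y))) = Fintype.card ι' := by
        rw [← hspan, finrank_span_eq_card hf]
    _ = finrank ℝ ↥(span ℝ (Set.range (v x ∘ f))) := (finrank_span_eq_card hfx).symm
    _ ≤ _ := finrank_mono (span_mono (Set.range_comp_subset_range f (v x)))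

end Specialization

def topRows {n d : ℕ} (hdn : d ≤ n) : EuclideanSpace ℝ (Fin n) →ₗ[ℝ] Fin d → ℝ where
  toFun v i := v (Fin.castLE hdn i)
  map_add' _ _ := rfl
  map_smul' _ _ := rfl

@[simp]
theorem topRows_apply {n d : ℕ} (hdn : d ≤ n) (v : EuclideanSpace ℝ (Fin n)) (i : Fin d) :
    topRows hdn v i = v (Fin.castLE hdn i) :=
  rfl

section ColVec

variable {n d : ℕ} {G : Matrix (Fin d) (Fin d) ℝ}

theorem topRows_comp_colVec (hdn : d ≤ n) (T : Matrix (Fin (n - d)) (Fin d) ℝ) :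
    topRows hdn ∘ colVec n d G T = G.col := by
  ext j i
  simp [colVec, Matrix.col]

theorem linearIndependent_colVec (hdn : d ≤ n) (hG : IsUnit G.det)
    (T : Matrix (Fin (n - d)) (Fin d) ℝ) :
    LinearIndependent ℝ (colVec n d G T) := by
  refine LinearIndependent.of_comp (topRows hdn) ?_
  rw [topRows_comp_colVec]
  exact Matrix.linearIndependent_cols_iff_isUnit.mpr ((Matrix.isUnit_iff_isUnit_det G).mpr hG)

theorem ker_topRows_sup_span_colVec (hdn : d ≤ n) (hG : IsUnit G.det)
    (T : Matrix (Fin (n - d)) (Fin d) ℝ) :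
    LinearMap.ker (topRows hdn) ⊔ span ℝ (Set.range (colVec n d G T)) = ⊤ := by
  have hmap : (span ℝ (Set.range (colVec n d G T))).map (topRows hdn) = ⊤ := by
    rw [map_span, ← Set.range_comp, topRows_comp_colVec]
    exact (Matrix.linearIndependent_cols_iff_isUnit.mpr ((Matrix.isUnit_iff_isUnit_det G).mpr hG)
      ).span_eq_top_of_card_eq_finrank' (by simp)
  have hrange : LinearMap.range (topRows hdn) = ⊤ :=
    top_le_iff.mp (hmap ▸ LinearMap.map_le_range)
  rw [sup_comm, ← LinearMap.map_eq_top_iff hrange, hmap]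

theorem exists_colVec_eq_of_sub_mem_ker (hdn : d ≤ n) {T : Matrix (Fin (n - d)) (Fin d) ℝ}
    {a : Fin d → EuclideanSpace ℝ (Fin n)}
    (ha : ∀ j, a j - colVec n d G T j ∈ LinearMap.ker (topRows hdn)) :
    ∃ T', colVec n d G T' = a := by
  refine ⟨fun i j => a j ⟨d + i, by omega⟩, funext fun j => ?_⟩
  ext k
  by_cases hk : (k : ℕ) < d
  · have := congrFun (LinearMap.mem_ker.mp (ha j)) ⟨k, hk⟩
    simp [colVec, hk] at this ⊢
    linarith
  · simp only [colVec, PiLp.toLp_apply, dif_neg hk]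
    exact congrArg (a j) (Fin.ext (by simp only; omega))

theorem exists_finrank_sup_span_colVec_ge (hdn : d ≤ n) (hG : IsUnit G.det)
    (B : Submodule ℝ (EuclideanSpace ℝ (Fin n))) :
    ∃ T, min n (finrank ℝ B + d) ≤ finrank ℝ ↥(B ⊔ span ℝ (Set.range (colVec n d G T))) := by
  obtain ⟨a, haE, ha⟩ :=
    exists_sub_mem_finrank_sup_span_range_ge (ker_topRows_sup_span_colVec hdn hG 0) B
  obtain ⟨T, rfl⟩ := exists_colVec_eq_of_sub_mem_ker hdn haE
  exact ⟨T, by simpa using ha⟩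

end ColVec

theorem finrank_sup_span_colVec_le_of_algebraicIndependent {K : Type*} [Field K]
    [Algebra K ℝ] {n d : ℕ} {G : Matrix (Fin d) (Fin d) ℝ} {S : Matrix (Fin (n - d)) (Fin d) ℝ}
    (hG : ∀ i j, ∃ g : K, algebraMap K ℝ g = G i j)
    (hS : AlgebraicIndependent K fun p : Fin (n - d) × Fin d => S p.1 p.2)
    {B : Submodule ℝ (EuclideanSpace ℝ (Fin n))} (hB : IsRationalSubspace B)
    (T : Matrix (Fin (n - d)) (Fin d) ℝ) :
    finrank ℝ ↥(B ⊔ span ℝ (Set.range (colVec n d G T))) ≤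
      finrank ℝ ↥(B ⊔ span ℝ (Set.range (colVec n d G S))) := by
  obtain ⟨s, hs, rfl⟩ := hB
  have hspan (T' : Matrix (Fin (n - d)) (Fin d) ℝ) :
      span ℝ s ⊔ span ℝ (Set.range (colVec n d G T')) =
        span ℝ (Set.range (Sum.elim ((↑) : s → EuclideanSpace ℝ (Fin n)) (colVec n d G T'))) := by
    rw [Set.Sum.elim_range, span_union, Subtype.range_coe]
  rw [hspan, hspan]
  have hv : ∀ i k, ∃ P : MvPolynomial (Fin (n - d) × Fin d) K, ∀ z,
      Sum.elim ((↑) : s → EuclideanSpace ℝ (Fin n)) (colVec n d G fun i j => z (i, j)) i k =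
        MvPolynomial.aeval z P := by
    rintro (⟨w, hw⟩ | j) k
    · obtain ⟨q, hq⟩ := hs w hw k
      exact ⟨MvPolynomial.C (q : _), fun z => by simp [hq]⟩
    · by_cases hk : (k : ℕ) < d
      · obtain ⟨g, hg⟩ := hG ⟨k, hk⟩ j
        exact ⟨MvPolynomial.C g, fun z => by simp [colVec, hk, hg]⟩
      · exact ⟨MvPolynomial.X (⟨k - d, by omega⟩, j), fun z => by simp [colVec, hk]⟩
  exact finrank_span_range_le_of_algebraicIndependent hv hS fun p => T p.1 p.2

theorem statement6 (n d : ℕ) (hd2 : d ≤ n - 1)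
    (G : Matrix (Fin d) (Fin d) ℝ) (S : Matrix (Fin (n - d)) (Fin d) ℝ)
    (hG : IsUnit G.det)
    (hS : AlgebraicIndependent (IntermediateField.adjoin ℚ {x : ℝ | ∃ i j, G i j = x})
      fun p : Fin (n - d) × Fin d => S p.1 p.2) :
    ∀ e, 1 ≤ e → e ≤ n - 1 →
      IsIrrational (Submodule.span ℝ (Set.range (colVec n d G S))) e 1 := by
  intro e _ _ B hB hBe
  have hdn : d ≤ n := by omega
  have hA : finrank ℝ ↥(span ℝ (Set.range (colVec n d G S))) = d := by
    rw [finrank_span_eq_card (linearIndependent_colVec hdn hG S), Fintype.card_fin]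
  obtain ⟨T, hT⟩ := exists_finrank_sup_span_colVec_ge hdn hG B
  have hGK (i j) : ∃ g : IntermediateField.adjoin ℚ {x : ℝ | ∃ i j, G i j = x},
      algebraMap _ ℝ g = G i j :=
    ⟨⟨G i j, IntermediateField.subset_adjoin ℚ _ ⟨i, j, rfl⟩⟩, rfl⟩
  have hTS := finrank_sup_span_colVec_le_of_algebraicIndependent hGK hS hB T
  have hsum := finrank_sup_add_finrank_inf_eq (span ℝ (Set.range (colVec n d G S))) B
  rw [sup_comm] at hsum
  rw [hA] at hsum ⊢
  omega
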